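/- arXiv:2402.12360 — 2 statements merged into one kernel-verified Lean document; each statement's English description precedes it below -/
import Mathlib

section
/- The map T(x₁,x₂) = (x₁/(1+x₁) + 0.9·x₂, (5/2)·(x₁/(1+x₁) + x₂)) satisfies, for all x₁ ≠ −1 with the transformed first coordinate ≠ −1, the functional equations T₁(Φ(x)) = 0.5·x₁/(1+x₁) and T₂(Φ(x)) = 0.1·T₂(x) + x₁/(1+x₁), together with T(0,0) = (0,0). -/
noncomputable def Phi2 : ℝ × ℝ → ℝ × ℝ := fun p =>
  ((0.5 * p.1 / (1 + p.1) - 0.9 * p.2) / (1 - 0.5 * p.1 / (1 + p.1) + 0.9 * p.2), p.2)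

noncomputable def T1bm2 : ℝ × ℝ → ℝ := fun p => p.1 / (1 + p.1) + 0.9 * p.2

noncomputable def T2bm2 : ℝ × ℝ → ℝ := fun p => (5 / 2) * (p.1 / (1 + p.1) + p.2)

theorem benchmark2_functional_equations :
    (∀ x₁ x₂ : ℝ, x₁ ≠ -1 →
      1 - 0.5 * x₁ / (1 + x₁) + 0.9 * x₂ ≠ 0 →
      (Phi2 (x₁, x₂)).1 ≠ -1 →
      T1bm2 (Phi2 (x₁, x₂)) = 0.5 * x₁ / (1 + x₁) ∧
      T2bm2 (Phi2 (x₁, x₂)) = 0.1 * T2bm2 (x₁, x₂) + x₁ / (1 + x₁)) ∧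
    T1bm2 (0, 0) = 0 ∧ T2bm2 (0, 0) = 0 := by
  refine ⟨fun x₁ x₂ hx hd hp => ?_, by norm_num [T1bm2], by norm_num [T2bm2]⟩
  have h1 : (1 : ℝ) + x₁ ≠ 0 := fun h => hx (by linarith)
  set d : ℝ := 1 - 0.5 * x₁ / (1 + x₁) + 0.9 * x₂ with hdd
  set y : ℝ := (0.5 * x₁ / (1 + x₁) - 0.9 * x₂) / d with hyy
  have hsum : d + (0.5 * x₁ / (1 + x₁) - 0.9 * x₂) = 1 := by rw [hdd]; ring
  have hy1 : 1 + y = 1 / d := by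
    rw [hyy, add_div' _ _ _ hd, one_mul, hsum]
  have hy1' : (1 : ℝ) + y ≠ 0 := by
    rw [hy1]; exact one_div_ne_zero hd
  have key : y / (1 + y) = 0.5 * x₁ / (1 + x₁) - 0.9 * x₂ := by
    rw [hy1, div_div_eq_mul_div, div_one, hyy, div_mul_cancel₀ _ hd]
  constructor
  · show y / (1 + y) + 0.9 * x₂ = 0.5 * x₁ / (1 + x₁)
    rw [key]; ring
  · show (5 / 2) * (y / (1 + y) + x₂) = 0.1 * ((5 / 2) * (x₁ / (1 + x₁) + x₂)) + x₁ / (1 + x₁)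
    rw [key]; ring
end

section
/- For benchmark 2 with output y(t) = x₁(t), the observer ẑ₁(t+1) = 0.5·y(t)/(1+y(t)), ẑ₂(t+1) = 0.1·ẑ₂(t) + y(t)/(1+y(t)) satisfies: if x₂(t) ≡ x₂ is constant (as the dynamics enforce) and x(t), ẑ(t) evolve per the system and observer equations, then the error T₂(x(t)) − ẑ₂(t) satisfies e(t+1) = 0.1·e(t), and hence |T₂(x(t)) − ẑ₂(t)| = 0.1ᵗ·|T₂(x(0)) − ẑ₂(0)| → 0 geometrically. -/
/-!
Put `σ x = x / (1 + x)`. The update of `x₁` is `a ↦ a / (1 - a)` applied to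
`a = 0.5 σ(x₁) - 0.9 x₂`, and `σ` inverts this map, so `σ(x₁(t+1)) = 0.5 σ(x₁ t) - 0.9 x₂`.
Hence `T₂(x(t+1)) = 1.25 σ(x₁ t) + 0.25 x₂`, and subtracting the observer update leaves
`e (t+1) = 0.1 e t`; the rest is a geometric sequence with ratio `0.1`.
-/

open Filter Topology

theorem div_one_add_div_one_sub {K : Type*} [Field K] {a : K} (ha : 1 - a ≠ 0) :
    a / (1 - a) / (1 + a / (1 - a)) = a := by
  field_simp
  ring

theorem eq_pow_mul_of_succ_eq_mul {M : Type*} [Monoid M] {c : M} {u : ℕ → M}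
    (h : ∀ n, u (n + 1) = c * u n) (n : ℕ) : u n = c ^ n * u 0 := by
  induction n with
  | zero => rw [pow_zero, one_mul]
  | succ n ih => rw [h n, ih, pow_succ', mul_assoc]

theorem abs_eq_pow_mul_abs_of_succ_eq_mul {c : ℝ} (hc : 0 ≤ c) {u : ℕ → ℝ}
    (h : ∀ n, u (n + 1) = c * u n) (n : ℕ) : |u n| = c ^ n * |u 0| := by
  rw [eq_pow_mul_of_succ_eq_mul h n, abs_mul, abs_pow, abs_of_nonneg hc]

theorem tendsto_zero_of_succ_eq_mul {c : ℝ} (hc : |c| < 1) {u : ℕ → ℝ}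
    (h : ∀ n, u (n + 1) = c * u n) : Tendsto u atTop (𝓝 0) := by
  have hgeom := (tendsto_pow_atTop_nhds_zero_of_abs_lt_one hc).mul_const (u 0)
  rw [zero_mul] at hgeom
  exact hgeom.congr fun n => (eq_pow_mul_of_succ_eq_mul h n).symm

theorem benchmark2_error_geometric
    (x₁ : ℕ → ℝ) (x₂ : ℝ) (z₂ : ℕ → ℝ)
    (hden : ∀ t, 1 + x₁ t ≠ 0 ∧ 1 - 0.5 * x₁ t / (1 + x₁ t) + 0.9 * x₂ ≠ 0)
    (hx : ∀ t, x₁ (t + 1) =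
      (0.5 * x₁ t / (1 + x₁ t) - 0.9 * x₂) / (1 - 0.5 * x₁ t / (1 + x₁ t) + 0.9 * x₂))
    (hz : ∀ t, z₂ (t + 1) = 0.1 * z₂ t + x₁ t / (1 + x₁ t))
    (e : ℕ → ℝ)
    (he : ∀ t, e t = 2.5 * (x₁ t / (1 + x₁ t) + x₂) - z₂ t) :
    (∀ t, e (t + 1) = 0.1 * e t) ∧
    (∀ t, |e t| = 0.1 ^ t * |e 0|) ∧
    Filter.Tendsto e Filter.atTop (nhds 0) := by
  have hstep : ∀ t, e (t + 1) = 0.1 * e t := by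
    intro t
    have hsub : 1 - 0.5 * x₁ t / (1 + x₁ t) + 0.9 * x₂
        = 1 - (0.5 * x₁ t / (1 + x₁ t) - 0.9 * x₂) := by ring
    have hσ : x₁ (t + 1) / (1 + x₁ (t + 1)) = 0.5 * x₁ t / (1 + x₁ t) - 0.9 * x₂ := by
      rw [hx t, hsub]
      exact div_one_add_div_one_sub (hsub ▸ (hden t).2)
    rw [he, he, hσ, hz]
    ring
  exact ⟨hstep, abs_eq_pow_mul_abs_of_succ_eq_mul (by norm_num) hstep,
    tendsto_zero_of_succ_eq_mul (by norm_num [abs_of_pos]) hstep⟩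
end
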